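/- The poset ℙ_hom of countable homogeneous normal subtrees of ⟨2^{<ω₁}, ⊆⟩, ordered by T ≤ T' iff ht(T') ≤ ht(T) and T' = T restricted below height ht(T'), is ω₁-closed: every countable decreasing sequence has a lower bound. -/

import Mathlib

noncomputable section

/-- `ω₁` as an ordinal. -/
def omega1 : Ordinal := (Cardinal.aleph 1).ord

/-- A partial node: a partial function from ordinals into `2 = Fin 2`.
Elements of `2^{<ω₁}` are those whose domain is a (countable) ordinal. -/
abbrev PNode := Ordinal → Option (Fin 2)

/-- `u` is a function with domain `β`, i.e. `u ∈ 2^β`. -/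
def IsNode (u : PNode) (β : Ordinal) : Prop := ∀ γ, (u γ).isSome ↔ γ < β

/-- The extension (inclusion) order on partial functions. -/
def extn (u v : PNode) : Prop := ∀ γ x, u γ = some x → v γ = some x

/-- The translation map `F_{s,t}` for `s, t` of domain `α`:
`F_{s,t}(u)(γ) = u(γ) + t(γ) + s(γ) (mod 2)` for `γ < α`, and `u(γ)` otherwise. -/
def Fmap (α : Ordinal) (s t : PNode) (u : PNode) : PNode :=
  fun γ => (u γ).map (fun x => if γ < α then x + (t γ).getD 0 + (s γ).getD 0 else x)

/-- Restriction of a node below `δ`. -/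
def nrestrict (u : PNode) (δ : Ordinal) : PNode := fun γ => if γ < δ then u γ else none

/-- A subtree of `⟨2^{<ω₁}, ⊆⟩`: a set of functions with countable ordinal domains,
closed under restriction. -/
def Subtree (T : Set PNode) : Prop :=
  (∀ u ∈ T, ∃ β < omega1, IsNode u β) ∧ ∀ u ∈ T, ∀ δ, nrestrict u δ ∈ T

/-- The `α`-th level of `T`. -/
def tlevel (T : Set PNode) (α : Ordinal) : Set PNode := {u ∈ T | IsNode u α}

/-- The height of `T`: the least `α` with `T_α = ∅`. -/
def theight (T : Set PNode) : Ordinal := sInf {α | tlevel T α = ∅}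

/-- `T↾α`: the restriction of `T` below level `α`. -/
def treeRestrict (T : Set PNode) (α : Ordinal) : Set PNode := {u ∈ T | ∃ β < α, IsNode u β}

/-- Normality of a subtree of `2^{<ω₁}`: every non-top node has at least two immediate
successors; at limit levels, nodes are determined by their sets of predecessors
(unique limits); and every node has extensions at all higher levels below the height. -/
def NormalTree (T : Set PNode) : Prop :=
  (∀ u ∈ T, ∀ β, IsNode u β → β + 1 < theight T →
    ∃ v ∈ tlevel T (β + 1), ∃ w ∈ tlevel T (β + 1), v ≠ w ∧ extn u v ∧ extn u w) ∧
  (∀ α : Ordinal, Order.IsSuccLimit α → ∀ v ∈ tlevel T α, ∀ w ∈ tlevel T α,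
    {u ∈ T | extn u v ∧ u ≠ v} = {u ∈ T | extn u w ∧ u ≠ w} → v = w) ∧
  (∀ u ∈ T, ∀ β, IsNode u β → ∀ α, β ≤ α → α < theight T → ∃ v ∈ tlevel T α, extn u v)

/-- Homogeneity: for any `s, t` in the same level, `F_{s,t}` restricts to an
order isomorphism of `T` onto `T`. -/
def Homog (T : Set PNode) : Prop :=
  ∀ α : Ordinal, ∀ s ∈ tlevel T α, ∀ t ∈ tlevel T α,
    Set.BijOn (Fmap α s t) T T ∧
    ∀ u ∈ T, ∀ v ∈ T, (extn u v ↔ extn (Fmap α s t u) (Fmap α s t v))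

/-- The end-extension order on trees: `T ≤ T'` iff `ht T' ≤ ht T` and `T' = T↾ht(T')`. -/
def Tle (T T' : Set PNode) : Prop := theight T' ≤ theight T ∧ T' = treeRestrict T (theight T')

/-- The strict end-extension order on trees: `T < T'` iff `ht T' < ht T` and `T' = T↾ht(T')`. -/
def Tlt (T T' : Set PNode) : Prop := theight T' < theight T ∧ T' = treeRestrict T (theight T')

/-- The poset `ℙ_hom` of countable homogeneous normal subtrees of `2^{<ω₁}`. -/
def Phom : Set (Set PNode) := {T | T.Countable ∧ Subtree T ∧ NormalTree T ∧ Homog T}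

open Classical in
/-- The union `⋃ B` of a family of partial functions (as graphs). -/
def unionNode (B : Set PNode) : PNode :=
  fun γ => if h : ∃ x : Fin 2, ∃ u ∈ B, u γ = some x then some h.choose else none

/-- A branch of `T`: a chain meeting every nonempty level. -/
def TBranch (T B : Set PNode) : Prop :=
  B ⊆ T ∧ IsChain extn B ∧ ∀ α : Ordinal, (tlevel T α).Nonempty → (B ∩ tlevel T α).Nonempty

/-- A branch of `T↾α`: a chain in `T↾α` meeting every level below `α`. -/
def BranchBelow (T : Set PNode) (α : Ordinal) (C : Set PNode) : Prop :=
  C ⊆ treeRestrict T α ∧ IsChain extn C ∧ ∀ β < α, (C ∩ tlevel T β).Nonempty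

/-- The root: the empty function. -/
def emptyNode : PNode := fun _ => none

/-- A condition of `ℙ(T, I, ω₁)`: a function `p : I → T` with countable support. -/
def Cond (T : Set PNode) {ι : Type*} (p : ι → PNode) : Prop :=
  (∀ i, p i ∈ T) ∧ {i | p i ≠ emptyNode}.Countable

/-- The order on `ℙ(T, I, ω₁)`: `p ≤ q` iff `q(i) ≤_T p(i)` for all `i`. -/
def ple {ι : Type*} (p q : ι → PNode) : Prop := ∀ i, extn (q i) (p i)

/- Proof idea: the lower bound is the union `S` of the chain. Each `f n` is an initial segment of
`S`, and every level of `S` is a level of some `f n`; so each clause of normality (a statement about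
one node and a few levels) is inherited from a single `f n`. For homogeneity, `F_{s,t}` is a
bijection and an isomorphism on every `f k` containing `s` and `t`, and these `f k` exhaust
`S`. -/

section Nodes

variable {u v : PNode} {α β : Ordinal}

lemma IsNode.unique (hα : IsNode u α) (hβ : IsNode u β) : α = β := by
  by_contra hne
  rcases lt_or_gt_of_ne hne with h | h
  · exact lt_irrefl α ((hα α).mp ((hβ α).mpr h))
  · exact lt_irrefl β ((hβ β).mp ((hα β).mpr h))

lemma IsNode.le_of_extn (hu : IsNode u β) (hv : IsNode v α) (h : extn u v) : β ≤ α := by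
  by_contra! hlt
  obtain ⟨x, hx⟩ := Option.isSome_iff_exists.mp ((hu α).mpr hlt)
  exact lt_irrefl α ((hv α).mp (by simp [h α x hx]))

lemma IsNode.eq_of_extn (hu : IsNode u β) (hv : IsNode v β) (h : extn u v) : u = v := by
  funext γ
  by_cases hγ : γ < β
  · obtain ⟨x, hx⟩ := Option.isSome_iff_exists.mp ((hu γ).mpr hγ)
    rw [hx, h γ x hx]
  · rw [Option.not_isSome_iff_eq_none.mp (mt (hu γ).mp hγ),
      Option.not_isSome_iff_eq_none.mp (mt (hv γ).mp hγ)]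

lemma IsNode.lt_of_extn (hu : IsNode u β) (hv : IsNode v α) (h : extn u v) (hne : u ≠ v) :
    β < α :=
  (hu.le_of_extn hv h).lt_of_ne fun hβα => hne (hu.eq_of_extn (hβα ▸ hv) h)

lemma IsNode.nrestrict (hu : IsNode u β) {δ : Ordinal} (hδ : δ ≤ β) :
    IsNode (nrestrict u δ) δ := by
  intro γ
  by_cases hγ : γ < δ
  · simp [_root_.nrestrict, hγ, (hu γ).mpr (hγ.trans_le hδ)]
  · simp [_root_.nrestrict, hγ]

end Nodes

section Height

variable {T T' T'' : Set PNode} {u : PNode} {α β : Ordinal}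

lemma tlevel_nonempty_of_lt_theight (h : α < theight T) : (tlevel T α).Nonempty :=
  Set.nonempty_iff_ne_empty.mpr fun he => not_le_of_gt h (csInf_le' he)

lemma Subtree.tlevel_theight_eq_empty (hT : Subtree T) : tlevel T (theight T) = ∅ := by
  refine csInf_mem (s := {α | tlevel T α = ∅}) ⟨omega1, Set.eq_empty_of_forall_notMem ?_⟩
  rintro v ⟨hvT, hv⟩
  obtain ⟨β, hβ, hvβ⟩ := hT.1 v hvT
  exact lt_irrefl _ (hvβ.unique hv ▸ hβ)

lemma Subtree.lt_theight (hT : Subtree T) (hu : u ∈ T) (hβ : IsNode u β) : β < theight T := by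
  by_contra! hle
  have : nrestrict u (theight T) ∈ tlevel T (theight T) := ⟨hT.2 u hu _, hβ.nrestrict hle⟩
  rwa [hT.tlevel_theight_eq_empty] at this

lemma Subtree.theight_le_of_subset (hT' : Subtree T') (h : T ⊆ T') : theight T ≤ theight T' := by
  refine le_of_forall_lt fun α hα => ?_
  obtain ⟨v, hvT, hv⟩ := tlevel_nonempty_of_lt_theight hα
  exact hT'.lt_theight (h hvT) hv

lemma Subtree.treeRestrict_theight (hT : Subtree T) : treeRestrict T (theight T) = T := by
  refine Set.Subset.antisymm (fun v hv => hv.1) fun v hv => ⟨hv, ?_⟩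
  obtain ⟨β, -, hβ⟩ := hT.1 v hv
  exact ⟨β, hT.lt_theight hv hβ, hβ⟩

lemma Subtree.tle_refl (hT : Subtree T) : Tle T T :=
  ⟨le_rfl, hT.treeRestrict_theight.symm⟩

lemma Tle.subset (h : Tle T T') : T' ⊆ T := by
  rw [h.2]
  exact fun v hv => hv.1

lemma treeRestrict_treeRestrict (hαβ : α ≤ β) :
    treeRestrict (treeRestrict T β) α = treeRestrict T α := by
  ext v
  exact ⟨fun hv => ⟨hv.1.1, hv.2⟩,
    fun ⟨hvT, γ, hγ, hv⟩ => ⟨⟨hvT, γ, hγ.trans_le hαβ, hv⟩, γ, hγ, hv⟩⟩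

lemma Tle.trans (h : Tle T T') (h' : Tle T' T'') : Tle T T'' :=
  ⟨h'.1.trans h.1, h'.2.trans <|
    (congrArg (treeRestrict · (theight T'')) h.2).trans (treeRestrict_treeRestrict h'.1)⟩

end Height

lemma tle_of_forall_tle_succ {f : ℕ → Set PNode} (hsub : ∀ n, Subtree (f n))
    (hdec : ∀ n, Tle (f (n + 1)) (f n)) {n m : ℕ} (hnm : n ≤ m) : Tle (f m) (f n) := by
  induction m, hnm using Nat.le_induction with
  | base => exact (hsub n).tle_refl
  | succ m _ ih => exact (hdec m).trans ih

lemma Directed.exists_superset_mem {ι α : Type*} {f : ι → Set α} (hdir : Directed (· ⊆ ·) f)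
    (k₀ : ι) {u : α} (hu : u ∈ ⋃ i, f i) : ∃ k, f k₀ ⊆ f k ∧ u ∈ f k := by
  obtain ⟨m, hm⟩ := Set.mem_iUnion.mp hu
  obtain ⟨k, hk₀, hkm⟩ := hdir k₀ m
  exact ⟨k, hk₀, hkm hm⟩

section Union

variable {ι : Type*} {f : ι → Set PNode} {u : PNode} {α β : Ordinal}

lemma Subtree.iUnion (hsub : ∀ i, Subtree (f i)) : Subtree (⋃ i, f i) := by
  refine ⟨fun v hv => ?_, fun v hv δ => ?_⟩ <;> obtain ⟨i, hi⟩ := Set.mem_iUnion.mp hv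
  · exact (hsub i).1 v hi
  · exact Set.mem_iUnion_of_mem i ((hsub i).2 v hi δ)

lemma exists_lt_theight_of_lt_theight_iUnion (hsub : ∀ i, Subtree (f i))
    (hα : α < theight (⋃ i, f i)) : ∃ i, α < theight (f i) := by
  obtain ⟨v, hv, hvα⟩ := tlevel_nonempty_of_lt_theight hα
  obtain ⟨i, hi⟩ := Set.mem_iUnion.mp hv
  exact ⟨i, (hsub i).lt_theight hi hvα⟩

variable (hdir : Directed (flip Tle) f)
include hdir

lemma mem_of_mem_iUnion_of_lt_theight (hu : u ∈ ⋃ i, f i) (hβ : IsNode u β) {n : ι}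
    (hlt : β < theight (f n)) : u ∈ f n := by
  obtain ⟨m, hm⟩ := Set.mem_iUnion.mp hu
  obtain ⟨k, hkm, hkn⟩ := hdir m n
  rw [hkn.2]
  exact ⟨hkm.subset hm, β, hlt, hβ⟩

lemma tlevel_iUnion_of_lt_theight {n : ι} (hα : α < theight (f n)) :
    tlevel (⋃ i, f i) α = tlevel (f n) α := by
  ext v
  exact ⟨fun ⟨hv, hvα⟩ => ⟨mem_of_mem_iUnion_of_lt_theight hdir hv hvα hα, hvα⟩,
    fun ⟨hv, hvα⟩ => ⟨Set.mem_iUnion_of_mem n hv, hvα⟩⟩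

lemma tle_iUnion (hsub : ∀ i, Subtree (f i)) (n : ι) : Tle (⋃ i, f i) (f n) := by
  refine ⟨(Subtree.iUnion hsub).theight_le_of_subset (Set.subset_iUnion f n), ?_⟩
  ext v
  refine ⟨fun hv => ?_, fun ⟨hv, β, hβ, hvβ⟩ => mem_of_mem_iUnion_of_lt_theight hdir hv hvβ hβ⟩
  obtain ⟨β, -, hβ⟩ := (hsub n).1 v hv
  exact ⟨Set.mem_iUnion_of_mem n hv, β, (hsub n).lt_theight hv hβ, hβ⟩

lemma normalTree_iUnion (hsub : ∀ i, Subtree (f i)) (hnorm : ∀ i, NormalTree (f i)) :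
    NormalTree (⋃ i, f i) := by
  have hS := Subtree.iUnion hsub
  refine ⟨fun v hv β hβ hβ₁ => ?_, fun α hlim v hv w hw hpred => ?_,
    fun v hv β hβ α hβα hα => ?_⟩
  · obtain ⟨n, hn⟩ := exists_lt_theight_of_lt_theight_iUnion hsub hβ₁
    have hvn := mem_of_mem_iUnion_of_lt_theight hdir hv hβ ((lt_add_one β).trans hn)
    rw [tlevel_iUnion_of_lt_theight hdir hn]
    exact (hnorm n).1 v hvn β hβ hn
  · obtain ⟨n, hn⟩ := exists_lt_theight_of_lt_theight_iUnion hsub (hS.lt_theight hv.1 hv.2)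
    rw [tlevel_iUnion_of_lt_theight hdir hn] at hv hw
    -- a proper predecessor of a node of level `α < ht (f n)` lies below `α`, hence in `f n`
    have hpred_eq : ∀ z ∈ tlevel (f n) α,
        {x ∈ ⋃ i, f i | extn x z ∧ x ≠ z} = {x ∈ f n | extn x z ∧ x ≠ z} := by
      refine fun z hz => Set.Subset.antisymm (fun x ⟨hx, hxz, hne⟩ => ⟨?_, hxz, hne⟩)
        fun x ⟨hx, hxz, hne⟩ => ⟨Set.mem_iUnion_of_mem n hx, hxz, hne⟩
      obtain ⟨γ, -, hγ⟩ := hS.1 x hx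
      exact mem_of_mem_iUnion_of_lt_theight hdir hx hγ ((hγ.lt_of_extn hz.2 hxz hne).trans hn)
    refine (hnorm n).2.1 α hlim v hv w hw ?_
    rwa [← hpred_eq v hv, ← hpred_eq w hw]
  · obtain ⟨n, hn⟩ := exists_lt_theight_of_lt_theight_iUnion hsub hα
    rw [tlevel_iUnion_of_lt_theight hdir hn]
    exact (hnorm n).2.2 v (mem_of_mem_iUnion_of_lt_theight hdir hv hβ (hβα.trans_lt hn)) β hβ α
      hβα hn

lemma homog_iUnion (hhom : ∀ i, Homog (f i)) : Homog (⋃ i, f i) := by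
  have hdir' : Directed (· ⊆ ·) f := hdir.mono fun _ _ h => Tle.subset h
  intro α s hs t ht
  obtain ⟨a, has⟩ := Set.mem_iUnion.mp hs.1
  obtain ⟨k₀, hak₀, htk₀⟩ := hdir'.exists_superset_mem a ht.1
  have hk : ∀ k, f k₀ ⊆ f k → Set.BijOn (Fmap α s t) (f k) (f k) ∧
      ∀ u ∈ f k, ∀ v ∈ f k, (extn u v ↔ extn (Fmap α s t u) (Fmap α s t v)) :=
    fun k hk => hhom k α s ⟨hk (hak₀ has), hs.2⟩ t ⟨hk htk₀, ht.2⟩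
  have hpair : ∀ u ∈ ⋃ i, f i, ∀ v ∈ ⋃ i, f i, ∃ k, f k₀ ⊆ f k ∧ u ∈ f k ∧ v ∈ f k := by
    intro u hu v hv
    obtain ⟨k₁, hk₀₁, hu₁⟩ := hdir'.exists_superset_mem k₀ hu
    obtain ⟨k, hk₁, hv⟩ := hdir'.exists_superset_mem k₁ hv
    exact ⟨k, hk₀₁.trans hk₁, hk₁ hu₁, hv⟩
  refine ⟨⟨fun u hu => ?_, fun u hu v hv => ?_, fun u hu => ?_⟩, fun u hu v hv => ?_⟩
  · obtain ⟨k, hk₀, hu⟩ := hdir'.exists_superset_mem k₀ hu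
    exact Set.mem_iUnion_of_mem k ((hk k hk₀).1.mapsTo hu)
  · obtain ⟨k, hk₀, hu, hv⟩ := hpair u hu v hv
    exact (hk k hk₀).1.injOn hu hv
  · obtain ⟨k, hk₀, hu⟩ := hdir'.exists_superset_mem k₀ hu
    obtain ⟨w, hw, rfl⟩ := (hk k hk₀).1.surjOn hu
    exact ⟨w, Set.mem_iUnion_of_mem k hw, rfl⟩
  · obtain ⟨k, hk₀, hu, hv⟩ := hpair u hu v hv
    exact (hk k hk₀).2 u hu v hv

end Union

/-- `ℙ_hom` is `ω₁`-closed: every countable decreasing sequence of countable homogeneous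
normal subtrees of `2^{<ω₁}` (ordered by end-extension) has a lower bound in `ℙ_hom`. -/
theorem stmt9 (f : ℕ → Set PNode) (hf : ∀ n, f n ∈ Phom)
    (hdec : ∀ n, Tle (f (n + 1)) (f n)) :
    ∃ S ∈ Phom, ∀ n, Tle S (f n) := by
  have hsub : ∀ n, Subtree (f n) := fun n => (hf n).2.1
  have hdir : Directed (flip Tle) f :=
    directed_of_isDirected_le fun _ _ hnm => tle_of_forall_tle_succ hsub hdec hnm
  refine ⟨⋃ n, f n, ⟨Set.countable_iUnion fun n => (hf n).1, Subtree.iUnion hsub,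
    normalTree_iUnion hdir hsub fun n => (hf n).2.2.1, homog_iUnion hdir fun n => (hf n).2.2.2⟩,
    tle_iUnion hdir hsub⟩

end
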